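/- arXiv:1207.1138 — 5 statements merged into one kernel-verified Lean document; each statement's English description precedes it below -/
import Mathlib

section
/- If there exists a self-synchronizing (v,k,ρ)-quantum tag, then ρ(v-1) ≤ 2k(v-k). -/
/-- If there exists a self-synchronizing `(v,k,ρ)`-quantum tag, i.e. a subset
`T ⊆ ℤ/vℤ` with `|T| = k` and `ρ ≥ 1` such that
`|T ∪ (T+t)| − |T ∩ (T+t)| ≥ ρ` for every nonzero `t`, then
`ρ(v−1) ≤ 2k(v−k)`. -/
theorem selfSync_tag_comma_free_index_bound (v k ρ : ℕ) (T : Finset (ZMod v))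
    (hT : T.card = k) (hρ : 1 ≤ ρ)
    (hsync : ∀ t : ZMod v, t ≠ 0 →
      ρ ≤ (T ∪ T.image (· + t)).card - (T ∩ T.image (· + t)).card) :
    ρ * (v - 1) ≤ 2 * k * (v - k) := by
  rcases Nat.eq_zero_or_pos v with hv | hv
  · subst hv; simp
  haveI : NeZero v := ⟨by omega⟩
  -- the image has the same cardinality
  have himg : ∀ t : ZMod v, (T.image (· + t)).card = k := by
    intro t
    rw [Finset.card_image_of_injective _ (add_left_injective t), hT]
  -- rewrite the intersection as a filter
  have hf : ∀ t : ZMod v, T ∩ T.image (· + t) = T.filter (fun b => b - t ∈ T) := by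
    intro t
    ext b
    simp only [Finset.mem_inter, Finset.mem_image, Finset.mem_filter]
    constructor
    · rintro ⟨hb, a, ha, rfl⟩
      simpa using ⟨hb, ha⟩
    · rintro ⟨hb, h⟩
      exact ⟨hb, b - t, h, by ring⟩
  -- key pointwise inequality
  have hkey : ∀ t : ZMod v, t ≠ 0 →
      ρ + 2 * (T.filter (fun b => b - t ∈ T)).card ≤ 2 * k := by
    intro t ht
    have h1 := hsync t ht
    have h2 : (T ∪ T.image (· + t)).card + (T ∩ T.image (· + t)).card = k + k := by
      rw [Finset.card_union_add_card_inter, hT, himg]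
    have h3 : (T ∩ T.image (· + t)).card ≤ k := by
      rw [← hT]; exact Finset.card_le_card Finset.inter_subset_left
    rw [hf] at h2 h3 h1
    omega
  -- total sum of intersection sizes is k^2
  have hsum0 : ∑ t : ZMod v, (T.filter (fun b => b - t ∈ T)).card = k * k := by
    have : ∀ t : ZMod v, (T.filter (fun b => b - t ∈ T)).card
        = ∑ b ∈ T, if b - t ∈ T then 1 else 0 := by
      intro t; rw [Finset.card_filter]
    simp only [this]
    rw [Finset.sum_comm]
    have hb : ∀ b : ZMod v, (∑ t : ZMod v, if b - t ∈ T then 1 else 0) = k := by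
      intro b
      rw [← Finset.card_filter]
      have : Finset.univ.filter (fun t => b - t ∈ T) = T.image (fun a => b - a) := by
        ext t
        simp only [Finset.mem_filter, Finset.mem_univ, true_and, Finset.mem_image]
        constructor
        · intro h; exact ⟨b - t, h, by ring⟩
        · rintro ⟨a, ha, rfl⟩; simpa using ha
      rw [this, Finset.card_image_of_injective _ sub_right_injective, hT]
    calc ∑ b ∈ T, ∑ t : ZMod v, (if b - t ∈ T then 1 else 0)
        = ∑ b ∈ T, k := by exact Finset.sum_congr rfl fun b _ => hb b
      _ = k * k := by rw [Finset.sum_const, hT, smul_eq_mul]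
  -- value at t = 0
  have h0 : (T.filter (fun b => b - (0 : ZMod v) ∈ T)).card = k := by
    simp only [sub_zero]
    rw [Finset.filter_true_of_mem (fun b hb => hb), hT]
  -- sum over nonzero t
  have hsum : ∑ t ∈ Finset.univ.erase (0 : ZMod v),
      (T.filter (fun b => b - t ∈ T)).card = k * k - k := by
    have := Finset.add_sum_erase Finset.univ
      (fun t : ZMod v => (T.filter (fun b => b - t ∈ T)).card)
      (Finset.mem_univ 0)
    omega
  have hcard : (Finset.univ.erase (0 : ZMod v)).card = v - 1 := by
    rw [Finset.card_erase_of_mem (Finset.mem_univ 0), Finset.card_univ, ZMod.card]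
  -- sum the key inequality
  have hmain : ρ * (v - 1) + 2 * (k * k - k) ≤ 2 * k * (v - 1) := by
    have h := Finset.sum_le_sum (f := fun t : ZMod v =>
        ρ + 2 * (T.filter (fun b => b - t ∈ T)).card)
      (g := fun _ : ZMod v => 2 * k)
      (s := Finset.univ.erase (0 : ZMod v))
      (fun t ht => hkey t (Finset.ne_of_mem_erase ht))
    rw [Finset.sum_add_distrib, ← Finset.mul_sum, hsum, Finset.sum_const, Finset.sum_const,
      hcard, smul_eq_mul, smul_eq_mul] at h
    calc ρ * (v - 1) + 2 * (k * k - k) = (v - 1) * ρ + 2 * (k * k - k) := by ring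
      _ ≤ (v - 1) * (2 * k) := h
      _ = 2 * k * (v - 1) := by ring
  -- conclude
  have hkv : k ≤ v := by
    have := Finset.card_le_univ T
    rwa [hT, ZMod.card] at this
  have hkk : k ≤ k * k := by nlinarith
  zify [hkv, hkk, hv] at hmain ⊢
  nlinarith [hmain]
end

section
/- Let v ≥ 2 and let T be a subset of Z_v with |T| = k, where 2 ≤ k ≤ v−1. Then T satisfies |T ∩ (T + t)| = k(k-1)/(v-1) for every nonzero t ∈ Z_v (in particular (v-1) divides k(k-1)) if and only if T is a cyclic difference set DS(v,k,μ) with μ = k(k-1)/(v-1). Equivalently, T is a self-synchronizing (v,k,ρ)-quantum tag with ρ = 2k(v-k)/(v-1) attaining the upper bound ρ(v-1) = 2k(v-k) if and only if T is a cyclic difference set. -/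
lemma count_eq_inter (v : ℕ) (T : Finset (ZMod v)) (t : ZMod v) (ht : t ≠ 0) :
    ((T ×ˢ T).filter (fun p => p.1 ≠ p.2 ∧ p.1 - p.2 = t)).card
      = (T ∩ T.image (· + t)).card := by
  apply Finset.card_bij (fun p _ => p.1)
  · rintro ⟨a, b⟩ hp
    simp only [Finset.mem_filter, Finset.mem_product] at hp
    obtain ⟨⟨ha, hb⟩, _, hd⟩ := hp
    simp only [Finset.mem_inter, Finset.mem_image]
    exact ⟨ha, b, hb, by rw [← hd]; ring⟩
  · rintro ⟨a, b⟩ hp ⟨c, d⟩ hq h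
    simp only [Finset.mem_filter, Finset.mem_product] at hp hq
    simp only at h
    obtain ⟨_, _, hd1⟩ := hp
    obtain ⟨_, _, hd2⟩ := hq
    have : b = d := by
      have h1 : b = a - t := by rw [← hd1]; ring
      have h2 : d = c - t := by rw [← hd2]; ring
      rw [h1, h2, h]
    exact Prod.ext h this
  · intro a ha
    simp only [Finset.mem_inter, Finset.mem_image] at ha
    obtain ⟨ha, b, hb, hab⟩ := ha
    refine ⟨(a, b), ?_, rfl⟩
    simp only [Finset.mem_filter, Finset.mem_product]
    refine ⟨⟨ha, hb⟩, ?_, by rw [← hab]; ring⟩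
    intro h
    apply ht
    have : a - b = t := by rw [← hab]; ring
    rw [h] at this
    simpa using this.symm

/-- Let `v ≥ 2` and `T ⊆ ℤ/vℤ` with `|T| = k`, `2 ≤ k ≤ v−1`.  Then
`|T ∩ (T + t)| · (v−1) = k(k−1)` for every nonzero `t` (i.e. `T` is a
self-synchronizing `(v,k,ρ)`-quantum tag attaining `ρ(v−1) = 2k(v−k)`) if and
only if `T` is a cyclic difference set `DS(v,k,μ)` with `μ(v−1) = k(k−1)`. -/
theorem optimal_tag_iff_cyclic_difference_set (v k : ℕ) (hv : 2 ≤ v)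
    (T : Finset (ZMod v)) (hT : T.card = k) (hk2 : 2 ≤ k) (hkv : k ≤ v - 1) :
    (∀ t : ZMod v, t ≠ 0 →
        (T ∩ T.image (· + t)).card * (v - 1) = k * (k - 1)) ↔
    (∃ μ : ℕ, 0 < μ ∧ μ < k ∧ μ * (v - 1) = k * (k - 1) ∧
      ∀ d : ZMod v, d ≠ 0 →
        ((T ×ˢ T).filter (fun p => p.1 ≠ p.2 ∧ p.1 - p.2 = d)).card = μ) := by
  have hv1 : 0 < v - 1 := by omega
  have hone : (1 : ZMod v) ≠ 0 := by
    haveI : NeZero v := ⟨by omega⟩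
    haveI : Fact (1 < v) := ⟨by omega⟩
    exact one_ne_zero
  constructor
  · intro h
    set μ := (T ∩ T.image (· + (1:ZMod v))).card with hμ
    have hμv : μ * (v - 1) = k * (k - 1) := h 1 hone
    have hμpos : 0 < μ := by
      rcases Nat.eq_zero_or_pos μ with h0 | h0
      · rw [h0, zero_mul] at hμv
        have : 0 < k * (k - 1) := Nat.mul_pos (by omega) (by omega)
        omega
      · exact h0
    have hμk : μ < k := by
      have h2 : k * (k - 1) < k * (v - 1) :=
        Nat.mul_lt_mul_of_le_of_lt (le_refl k) (by omega) (by omega)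
      have : μ * (v - 1) < k * (v - 1) := by rw [hμv]; exact h2
      exact Nat.lt_of_mul_lt_mul_right this
    refine ⟨μ, hμpos, hμk, hμv, fun d hd => ?_⟩
    rw [count_eq_inter v T d hd]
    have := h d hd
    exact Nat.eq_of_mul_eq_mul_right hv1 (by rw [this, hμv])
  · rintro ⟨μ, _, _, hμv, hμ⟩
    intro t ht
    rw [← count_eq_inter v T t ht, hμ t ht, hμv]
end

section
/- Let p and p + 2 both be primes with p odd. Let B be the set of ordered pairs (x, y) ∈ F_p × F_{p+2} such that either (x and y are both nonzero squares), or (x and y are both nonsquares), or y = 0. Then B is a difference set with parameters (p² + 2p, (p² + 2p − 1)/2, (p² + 2p − 3)/4) in the additive group Z_p × Z_{p+2}: |B| = (p² + 2p − 1)/2 and every nonzero element of Z_p × Z_{p+2} occurs exactly (p² + 2p − 3)/4 times as a difference a − b of two distinct elements a, b ∈ B. -/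
/-!
Let `χ`, `ψ` be the quadratic characters of `𝔽_q` and `𝔽_{q+2}` (`q` odd) and `δ` the indicator
of `0`. Since `χ² = 1 - δ`, twice the indicator of `B` is `(1 - δ) ⊗ (1 - δ) + 2 (1 ⊗ δ) + χ ⊗ ψ`,
so `4 · #{z ∈ B | z - d ∈ B}`, the autocorrelation of that function at `d`, is a sum of products
of one-variable correlations of `1`, `δ` and `χ`. The only nontrivial one is the Jacobi sum
`∑ₓ χ(x) χ(x - a) = -1` for `a ≠ 0`. The terms `χ(a)ψ(b)` and `χ(-a)ψ(-b)` cancel because exactly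
one of `q`, `q + 2` is `3 mod 4`, i.e. `χ(-1)ψ(-1) = -1`. What is left is `v - 3` for `d ≠ 0`,
where `v = q(q + 2)`, and `2v - 2` for `d = 0`, which gives `|B|`.
-/

open Finset

lemma card_filter_sub_eq_card_filter_sub_mem {G : Type*} [AddCommGroup G] [DecidableEq G]
    (s t : Finset G) (d : G) :
    #{q ∈ s ×ˢ t | q.1 - q.2 = d} = #{z ∈ s | z - d ∈ t} := by
  refine card_nbij' Prod.fst (fun z => (z, z - d)) ?_ ?_ ?_ ?_
  · rintro ⟨a, b⟩ h
    simp only [coe_filter, mem_product, Set.mem_ofPred_eq] at h ⊢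
    obtain ⟨⟨ha, hb⟩, rfl⟩ := h
    simpa using ⟨ha, hb⟩
  · intro z h
    simp_all
  · rintro ⟨a, b⟩ h
    simp only [coe_filter, mem_product, Set.mem_ofPred_eq] at h
    simp [← h.2]
  · intro z h
    simp

section CrossCorrelation

variable {R G H : Type*} [CommRing R] [AddCommGroup G] [Fintype G] [AddCommGroup H] [Fintype H]

def crossCorr (f g : G → R) (d : G) : R := ∑ z, f z * g (z - d)

def extProd (f : G → R) (g : H → R) (z : G × H) : R := f z.1 * g z.2

lemma crossCorr_add_left (f₁ f₂ g : G → R) (d : G) :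
    crossCorr (f₁ + f₂) g d = crossCorr f₁ g d + crossCorr f₂ g d := by
  simp only [crossCorr, Pi.add_apply, add_mul, sum_add_distrib]

lemma crossCorr_sub_left (f₁ f₂ g : G → R) (d : G) :
    crossCorr (f₁ - f₂) g d = crossCorr f₁ g d - crossCorr f₂ g d := by
  simp only [crossCorr, Pi.sub_apply, sub_mul, sum_sub_distrib]

lemma crossCorr_add_right (f g₁ g₂ : G → R) (d : G) :
    crossCorr f (g₁ + g₂) d = crossCorr f g₁ d + crossCorr f g₂ d := by
  simp only [crossCorr, Pi.add_apply, mul_add, sum_add_distrib]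

lemma crossCorr_sub_right (f g₁ g₂ : G → R) (d : G) :
    crossCorr f (g₁ - g₂) d = crossCorr f g₁ d - crossCorr f g₂ d := by
  simp only [crossCorr, Pi.sub_apply, mul_sub, sum_sub_distrib]

lemma crossCorr_extProd (f f' : G → R) (g g' : H → R) (d : G × H) :
    crossCorr (extProd f g) (extProd f' g') d = crossCorr f f' d.1 * crossCorr g g' d.2 := by
  simp only [crossCorr, extProd, Fintype.sum_prod_type, sum_mul_sum, Prod.fst_sub, Prod.snd_sub]
  exact sum_congr rfl fun _ _ => sum_congr rfl fun _ _ => by ring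

lemma crossCorr_one_left (g : G → R) (d : G) : crossCorr 1 g d = ∑ z, g z := by
  simp only [crossCorr, Pi.one_apply, one_mul]
  exact Fintype.sum_equiv (Equiv.subRight d) _ _ fun _ => rfl

lemma crossCorr_one_right (f : G → R) (d : G) : crossCorr f 1 d = ∑ z, f z := by
  simp [crossCorr]

lemma crossCorr_single_left [DecidableEq G] (g : G → R) (d : G) :
    crossCorr (Pi.single 0 1) g d = g (-d) := by
  simp [crossCorr, Pi.single_apply]

lemma crossCorr_single_right [DecidableEq G] (f : G → R) (d : G) :
    crossCorr f (Pi.single 0 1) d = f d := by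
  simp [crossCorr, Pi.single_apply, sub_eq_zero]

lemma crossCorr_ite_mem [DecidableEq G] (s t : Finset G) (a b : R) (d : G) :
    crossCorr (fun z => if z ∈ s then a else 0) (fun z => if z ∈ t then b else 0) d =
      #{z ∈ s | z - d ∈ t} * (a * b) := by
  simp only [crossCorr, ite_zero_mul_ite_zero, ← sum_filter, sum_const, nsmul_eq_mul]
  congr 3
  ext z
  simp

end CrossCorrelation

lemma ringChar_ne_two_of_odd_card {F : Type*} [Field F] [Fintype F] (h : Odd (Fintype.card F)) :
    ringChar F ≠ 2 := by
  rwa [Ne, FiniteField.even_card_iff_char_two, ← Nat.even_iff, Nat.not_even_iff_odd]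

section QuadraticChar

variable {F : Type*} [Field F] [Fintype F] [DecidableEq F]

lemma quadraticChar_eq_one_iff_exists_sq {x : F} :
    quadraticChar F x = 1 ↔ ∃ w, w ≠ 0 ∧ x = w ^ 2 := by
  rcases eq_or_ne x 0 with rfl | hx
  · simp [eq_comm (a := (0 : F))]
  · rw [quadraticChar_one_iff_isSquare hx, isSquare_iff_exists_sq]
    exact ⟨fun ⟨w, hw⟩ => ⟨w, by rintro rfl; simp_all, hw⟩, fun ⟨w, _, hw⟩ => ⟨w, hw⟩⟩

lemma quadraticChar_eq_neg_one_iff {x : F} :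
    quadraticChar F x = -1 ↔ x ≠ 0 ∧ ¬∃ w, x = w ^ 2 := by
  rw [quadraticChar_neg_one_iff_not_isSquare, isSquare_iff_exists_sq]
  exact ⟨fun h => ⟨by rintro rfl; exact h ⟨0, by simp⟩, h⟩, And.right⟩

lemma sum_quadraticChar_sq : ∑ x : F, quadraticChar F x ^ 2 = Fintype.card F - 1 := by
  have := MulChar.sum_one_eq_card_units (R := F) (R' := ℤ)
  rw [← (quadraticChar_isQuadratic F).sq_eq_one, Fintype.card_units,
    Nat.cast_sub Fintype.card_pos] at this
  simpa [MulChar.pow_apply'] using this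

lemma crossCorr_quadraticChar_self (hF : ringChar F ≠ 2) (a : F) :
    crossCorr (quadraticChar F) (quadraticChar F) a =
      if a = 0 then (Fintype.card F : ℤ) - 1 else -1 := by
  split_ifs with ha
  · simp only [crossCorr, ha, sub_zero, ← sq]
    exact sum_quadraticChar_sq
  · -- substituting `x = a t` turns the sum into `χ(-1) J(χ, χ)`
    have hJ := jacobiSum_nontrivial_inv (quadraticChar_ne_one hF)
    rw [(quadraticChar_isQuadratic F).inv, jacobiSum] at hJ
    have hscale (t : F) : quadraticChar F (a * t) * quadraticChar F (a * t - a) =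
        quadraticChar F (-1) * (quadraticChar F t * quadraticChar F (1 - t)) := by
      rw [show a * t - a = a * (-1) * (1 - t) by ring, map_mul, map_mul, map_mul]
      linear_combination (quadraticChar F (-1) * quadraticChar F t * quadraticChar F (1 - t)) *
        quadraticChar_sq_one ha
    rw [crossCorr, ← Equiv.sum_comp (Equiv.mulLeft₀ a ha)]
    simp only [Equiv.mulLeft₀_apply, hscale, ← mul_sum, hJ]
    linear_combination -quadraticChar_sq_one (neg_ne_zero.mpr (one_ne_zero (α := F)))

end QuadraticChar

section TwinSet

variable (K L : Type*) [Field K] [Fintype K] [DecidableEq K] [Field L] [Fintype L] [DecidableEq L]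

/-- `χ(x) ψ(y) = 1` says that `x` and `y` are both nonzero squares or both nonsquares. -/
def twinSet : Finset (K × L) :=
  univ.filter fun z => quadraticChar K z.1 * quadraticChar L z.2 = 1 ∨ z.2 = 0

lemma ite_mem_twinSet : (fun z => if z ∈ twinSet K L then (2 : ℤ) else 0) =
    extProd 1 1 - extProd (Pi.single 0 1) 1 + extProd 1 (Pi.single 0 1) +
      extProd (Pi.single 0 1) (Pi.single 0 1) + extProd (quadraticChar K) (quadraticChar L) := by
  ext ⟨x, y⟩
  simp only [twinSet, mem_filter, mem_univ, true_and, extProd, Pi.add_apply, Pi.sub_apply,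
    Pi.one_apply, Pi.single_apply]
  rcases eq_or_ne y 0 with rfl | hy
  · simp only [if_true, or_true, MulChar.map_zero, mul_zero]; ring
  rcases eq_or_ne x 0 with rfl | hx
  · simp [hy]
  rcases quadraticChar_dichotomy hx with h | h <;>
    rcases quadraticChar_dichotomy hy with h' | h' <;> simp [hx, hy, h, h']

variable {K L}

lemma quadraticChar_neg_one_mul_of_card_eq_add_two (hK : ringChar K ≠ 2) (hL : ringChar L ≠ 2)
    (hcard : Fintype.card L = Fintype.card K + 2) :
    quadraticChar K (-1) * quadraticChar L (-1) = -1 := by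
  have hodd := FiniteField.odd_card_of_char_ne_two hK
  rw [quadraticChar_neg_one hK, quadraticChar_neg_one hL, hcard]
  rcases (by omega : Fintype.card K % 4 = 1 ∨ Fintype.card K % 4 = 3) with h | h
  · rw [ZMod.χ₄_nat_one_mod_four h, ZMod.χ₄_nat_three_mod_four (by omega)]; rfl
  · rw [ZMod.χ₄_nat_three_mod_four h, ZMod.χ₄_nat_one_mod_four (by omega)]; rfl

theorem card_filter_sub_mem_twinSet (hK : Odd (Fintype.card K))
    (hcard : Fintype.card L = Fintype.card K + 2) (d : K × L) :
    (#{z ∈ twinSet K L | z - d ∈ twinSet K L} : ℤ) * 4 =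
      Fintype.card K * Fintype.card L - 3 +
        if d = 0 then (Fintype.card K * Fintype.card L + 1 : ℤ) else 0 := by
  have hK2 := ringChar_ne_two_of_odd_card hK
  have hL2 := ringChar_ne_two_of_odd_card (hcard ▸ hK.add_even even_two)
  have hsign := quadraticChar_neg_one_mul_of_card_eq_add_two hK2 hL2 hcard
  have hcorr := crossCorr_ite_mem (twinSet K L) (twinSet K L) (2 : ℤ) 2 d
  rw [ite_mem_twinSet] at hcorr
  simp only [crossCorr_add_left, crossCorr_sub_left, crossCorr_add_right, crossCorr_sub_right,
    crossCorr_extProd, crossCorr_single_left, crossCorr_single_right, crossCorr_one_left,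
    crossCorr_one_right, crossCorr_quadraticChar_self hK2, crossCorr_quadraticChar_self hL2,
    quadraticChar_sum_zero hK2, quadraticChar_sum_zero hL2, Pi.one_apply, sum_const, card_univ,
    nsmul_eq_mul, mul_one, Pi.single_apply, sum_ite_eq', mem_univ, if_true] at hcorr
  obtain ⟨a, b⟩ := d
  have hneg : quadraticChar K (-a) * quadraticChar L (-b) =
      -(quadraticChar K a * quadraticChar L b) := by
    rw [neg_eq_neg_one_mul a, neg_eq_neg_one_mul b, map_mul, map_mul]
    linear_combination (quadraticChar K a * quadraticChar L b) * hsign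
  simp only [Prod.mk_eq_zero, ite_and] at hcorr ⊢
  rw [hcard] at hcorr ⊢
  push_cast at hcorr ⊢
  split_ifs at hcorr ⊢ <;> linear_combination -hcorr + hneg

end TwinSet

/-- Twin prime difference set: for `p` and `p+2` both prime with `p` odd, the
set of pairs `(x, y) ∈ F_p × F_{p+2}` such that `x` and `y` are both nonzero
squares, or both nonsquares, or `y = 0`, is a difference set with parameters
`(p² + 2p, (p² + 2p − 1)/2, (p² + 2p − 3)/4)` in `ℤ/pℤ × ℤ/(p+2)ℤ`. -/
theorem twin_prime_difference_set (p : ℕ) [Fact p.Prime] [Fact (p + 2).Prime]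
    (hp : Odd p) :
    let B : Finset (ZMod p × ZMod (p + 2)) :=
      Finset.univ.filter (fun z =>
        ((∃ w : ZMod p, w ≠ 0 ∧ z.1 = w ^ 2) ∧
          (∃ w : ZMod (p + 2), w ≠ 0 ∧ z.2 = w ^ 2)) ∨
        ((z.1 ≠ 0 ∧ ¬ ∃ w : ZMod p, z.1 = w ^ 2) ∧
          (z.2 ≠ 0 ∧ ¬ ∃ w : ZMod (p + 2), z.2 = w ^ 2)) ∨
        z.2 = 0)
    B.card = (p ^ 2 + 2 * p - 1) / 2 ∧
    ∀ d : ZMod p × ZMod (p + 2), d ≠ 0 →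
      ((B ×ˢ B).filter (fun q => q.1 ≠ q.2 ∧ q.1 - q.2 = d)).card
        = (p ^ 2 + 2 * p - 3) / 4 := by
  intro B
  have hB : B = twinSet (ZMod p) (ZMod (p + 2)) := by
    ext z
    simp only [B, twinSet, mem_filter, mem_univ, true_and, ← quadraticChar_eq_one_iff_exists_sq,
      ← quadraticChar_eq_neg_one_iff, ← or_assoc, Int.mul_eq_one_iff_eq_one_or_neg_one]
  have hcorr (d : ZMod p × ZMod (p + 2)) := card_filter_sub_mem_twinSet
    (by rwa [ZMod.card]) (by simp only [ZMod.card]) d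
  have hv : ((p ^ 2 + 2 * p : ℕ) : ℤ) = Fintype.card (ZMod p) * Fintype.card (ZMod (p + 2)) := by
    simp only [ZMod.card]; push_cast; ring
  rw [← hB, ← hv] at hcorr
  generalize p ^ 2 + 2 * p = v at hcorr ⊢
  refine ⟨?_, fun d hd => ?_⟩
  · have hcard := hcorr 0
    simp only [sub_zero, filter_true_of_mem fun _ h => h, if_true] at hcard
    omega
  · have hcount := hcorr d
    rw [if_neg hd, ← card_filter_sub_eq_card_filter_sub_mem] at hcount
    have hne : ∀ q : (ZMod p × ZMod (p + 2)) × (ZMod p × ZMod (p + 2)),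
        q.1 - q.2 = d → q.1 ≠ q.2 := fun q hq heq => hd (by rw [← hq, heq, sub_self])
    rw [filter_congr fun q _ => and_iff_right_of_imp (hne q)]
    omega
end

section
/- Let C be a (v,k,1)-optical orthogonal code with k ≥ 2. Then for every codeword c'' ∈ C, every pair of codewords c, c' ∈ C (not necessarily distinct), and every integer i with 1 ≤ i ≤ v − 1, the Hamming distance between c'' and the splice (c_{v−i}, …, c_{v−1}, c'_0, …, c'_{v−i−1}) formed from the last i bits of c followed by the first v − i bits of c' is at least k − 2; that is, C is of comma-free index k − 2. -/
/-- A `(v,k,1)`-optical orthogonal code with `k ≥ 2` has comma-free index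
`k − 2`: the Hamming distance between any codeword `c''` and any splice
formed from the last `i` bits of a codeword `c` followed by the first `v − i`
bits of a codeword `c'` (for `1 ≤ i ≤ v − 1`) is at least `k − 2`.  The
splice is the vector whose `j`-th coordinate is `c (j − i)` when `j < i` and
`c' (j − i)` otherwise. -/
theorem ooc_comma_free_index (v k : ℕ) [NeZero v] (hk : 2 ≤ k)
    (C : Finset (ZMod v → Bool))
    (hwt : ∀ c ∈ C, (Finset.univ.filter (fun i => c i = true)).card = k)
    (hauto : ∀ c ∈ C, ∀ t : ZMod v, t ≠ 0 →
      (Finset.univ.filter (fun i => c i = true ∧ c (i + t) = true)).card ≤ 1)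
    (hcross : ∀ c ∈ C, ∀ c' ∈ C, c ≠ c' → ∀ t : ZMod v,
      (Finset.univ.filter (fun i => c i = true ∧ c' (i + t) = true)).card ≤ 1)
    (c : ZMod v → Bool) (hc : c ∈ C) (c' : ZMod v → Bool) (hc' : c' ∈ C)
    (c'' : ZMod v → Bool) (hc'' : c'' ∈ C) (i : ℕ) (hi1 : 1 ≤ i)
    (hi2 : i ≤ v - 1) :
    k - 2 ≤ (Finset.univ.filter (fun j : ZMod v =>
      c'' j ≠ (if j.val < i then c (j - (i : ZMod v))
               else c' (j - (i : ZMod v))))).card := by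
  have hv : 0 < v := Nat.pos_of_ne_zero (NeZero.ne v)
  have hvi : (i : ZMod v) ≠ 0 := by
    rw [Ne, ZMod.natCast_eq_zero_iff]
    intro h
    have := Nat.le_of_dvd (by omega) h
    omega
  set t : ZMod v := -(i : ZMod v) with ht
  have htne : t ≠ 0 := neg_ne_zero.mpr hvi
  set D := Finset.univ.filter (fun j : ZMod v =>
      c'' j ≠ (if j.val < i then c (j - (i : ZMod v))
               else c' (j - (i : ZMod v)))) with hD
  set A := Finset.univ.filter (fun j : ZMod v => c'' j = true ∧ c (j + t) = true) with hA
  set B := Finset.univ.filter (fun j : ZMod v => c'' j = true ∧ c' (j + t) = true) with hB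
  have hAcard : A.card ≤ 1 := by
    by_cases h : c'' = c
    · subst h; exact hauto c'' hc'' t htne
    · exact hcross c'' hc'' c hc h t
  have hBcard : B.card ≤ 1 := by
    by_cases h : c'' = c'
    · subst h; exact hauto c'' hc'' t htne
    · exact hcross c'' hc'' c' hc' h t
  have hsub : Finset.univ.filter (fun j : ZMod v => c'' j = true) ⊆ D ∪ A ∪ B := by
    intro j hj
    simp only [Finset.mem_filter, Finset.mem_univ, true_and] at hj
    simp only [Finset.mem_union, hD, hA, hB, Finset.mem_filter, Finset.mem_univ, true_and]
    by_cases hd : c'' j = (if j.val < i then c (j - (i : ZMod v)) else c' (j - (i : ZMod v)))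
    · have hjt : j + t = j - (i : ZMod v) := by rw [ht, sub_eq_add_neg]
      by_cases hji : j.val < i
      · left; right
        refine ⟨hj, ?_⟩
        rw [if_pos hji] at hd
        rw [hjt, ← hd]; exact hj
      · right
        refine ⟨hj, ?_⟩
        rw [if_neg hji] at hd
        rw [hjt, ← hd]; exact hj
    · left; left; exact hd
  have hk' : k ≤ D.card + A.card + B.card := by
    have h1 := hwt c'' hc''
    calc k = (Finset.univ.filter (fun j : ZMod v => c'' j = true)).card := h1.symm
      _ ≤ (D ∪ A ∪ B).card := Finset.card_le_card hsub
      _ ≤ (D ∪ A).card + B.card := Finset.card_union_le _ _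
      _ ≤ D.card + A.card + B.card := by
          have := Finset.card_union_le D A
          omega
  omega
end

section
/- Let C be a (v,k,1)-optical orthogonal code with k ≥ 2. Then |C| ≤ ⌊(1/k)·⌊(v−1)/(k−1)⌋⌋ (the Johnson bound). -/
/-- Johnson bound: a `(v,k,1)`-optical orthogonal code `C` with `k ≥ 2`
satisfies `|C| ≤ ⌊(1/k)·⌊(v−1)/(k−1)⌋⌋`. -/
theorem ooc_johnson_bound (v k : ℕ) [NeZero v] (hk : 2 ≤ k)
    (C : Finset (ZMod v → Bool))
    (hwt : ∀ c ∈ C, (Finset.univ.filter (fun i => c i = true)).card = k)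
    (hauto : ∀ c ∈ C, ∀ t : ZMod v, t ≠ 0 →
      (Finset.univ.filter (fun i => c i = true ∧ c (i + t) = true)).card ≤ 1)
    (hcross : ∀ c ∈ C, ∀ c' ∈ C, c ≠ c' → ∀ t : ZMod v,
      (Finset.univ.filter (fun i => c i = true ∧ c' (i + t) = true)).card ≤ 1) :
    C.card ≤ (v - 1) / (k - 1) / k := by
  classical
  set S : (ZMod v → Bool) → Finset (ZMod v) :=
    fun c => Finset.univ.filter (fun i => c i = true) with hS
  set D : (ZMod v → Bool) → Finset (ZMod v) :=
    fun c => (S c).offDiag.image (fun p => p.2 - p.1) with hD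
  -- membership characterization of D
  have hmemS : ∀ c (i : ZMod v), i ∈ S c ↔ c i = true := by
    intro c i; simp [hS]
  -- each D c has card k*(k-1)
  have hcardD : ∀ c ∈ C, (D c).card = k * (k - 1) := by
    intro c hc
    have hinj : Set.InjOn (fun p : ZMod v × ZMod v => p.2 - p.1) (S c).offDiag := by
      intro p hp q hq hpq
      simp only [Finset.mem_coe, Finset.mem_offDiag] at hp hq
      obtain ⟨hp1, hp2, hpne⟩ := hp
      obtain ⟨hq1, hq2, hqne⟩ := hq
      simp only at hpq
      set t := p.2 - p.1 with ht
      have htne : t ≠ 0 := sub_ne_zero.mpr (Ne.symm hpne)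
      have h1 : p.1 ∈ Finset.univ.filter (fun i => c i = true ∧ c (i + t) = true) := by
        simp only [Finset.mem_filter, Finset.mem_univ, true_and]
        constructor
        · exact (hmemS c p.1).mp hp1
        · have : p.1 + t = p.2 := by rw [ht]; ring
          rw [this]; exact (hmemS c p.2).mp hp2
      have h2 : q.1 ∈ Finset.univ.filter (fun i => c i = true ∧ c (i + t) = true) := by
        simp only [Finset.mem_filter, Finset.mem_univ, true_and]
        constructor
        · exact (hmemS c q.1).mp hq1
        · have : q.1 + t = q.2 := by linear_combination (ht.symm.trans hpq)
          rw [this]; exact (hmemS c q.2).mp hq2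
      have h11 : p.1 = q.1 := Finset.card_le_one.mp (hauto c hc t htne) _ h1 _ h2
      have h22 : p.2 = q.2 := by
        have : p.2 - p.1 = q.2 - q.1 := hpq
        rw [h11] at this
        exact sub_left_injective this
      exact Prod.ext h11 h22
    rw [hD]
    rw [Finset.card_image_of_injOn hinj, Finset.offDiag_card, hwt c hc,
      Nat.mul_sub_one]
  -- each D c avoids 0
  have hD0 : ∀ c, D c ⊆ Finset.univ.erase (0 : ZMod v) := by
    intro c t ht
    simp only [hD, Finset.mem_image] at ht
    obtain ⟨p, hp, hpt⟩ := ht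
    rw [Finset.mem_offDiag] at hp
    refine Finset.mem_erase.mpr ⟨?_, Finset.mem_univ _⟩
    rw [← hpt]
    exact sub_ne_zero.mpr (Ne.symm hp.2.2)
  -- disjointness
  have hdisj : (C : Set (ZMod v → Bool)).PairwiseDisjoint D := by
    intro c hc c' hc' hne
    simp only [Function.onFun, Finset.disjoint_left]
    intro t htc htc'
    simp only [hD, Finset.mem_image] at htc htc'
    obtain ⟨p, hp, hpt⟩ := htc
    obtain ⟨q, hq, hqt⟩ := htc'
    rw [Finset.mem_offDiag] at hp hq
    set s := q.1 - p.1 with hs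
    have h1 : p.1 ∈ Finset.univ.filter (fun x => c x = true ∧ c' (x + s) = true) := by
      simp only [Finset.mem_filter, Finset.mem_univ, true_and]
      refine ⟨(hmemS c p.1).mp hp.1, ?_⟩
      have : p.1 + s = q.1 := by rw [hs]; ring
      rw [this]; exact (hmemS c' q.1).mp hq.1
    have h2 : p.2 ∈ Finset.univ.filter (fun x => c x = true ∧ c' (x + s) = true) := by
      simp only [Finset.mem_filter, Finset.mem_univ, true_and]
      refine ⟨(hmemS c p.2).mp hp.2.1, ?_⟩
      have : p.2 + s = q.2 := by
        show p.2 + (q.1 - p.1) = q.2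
        linear_combination hpt - hqt
      rw [this]; exact (hmemS c' q.2).mp hq.2.1
    exact hp.2.2 (Finset.card_le_one.mp (hcross c hc c' hc' hne s) _ h1 _ h2)
  -- counting
  have hkey : C.card * (k * (k - 1)) ≤ v - 1 := by
    have h1 : (C.biUnion D).card = ∑ c ∈ C, (D c).card :=
      Finset.card_biUnion (fun c hc c' hc' h => hdisj hc hc' h)
    have h2 : ∑ c ∈ C, (D c).card = C.card * (k * (k - 1)) := by
      rw [Finset.sum_congr rfl hcardD, Finset.sum_const, smul_eq_mul]
    have h3 : (C.biUnion D).card ≤ (Finset.univ.erase (0 : ZMod v)).card := by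
      apply Finset.card_le_card
      intro t ht
      rw [Finset.mem_biUnion] at ht
      obtain ⟨c, _, htc⟩ := ht
      exact hD0 c htc
    have h4 : (Finset.univ.erase (0 : ZMod v)).card = v - 1 := by
      rw [Finset.card_erase_of_mem (Finset.mem_univ _), Finset.card_univ, ZMod.card]
    omega
  have hpos : 0 < (k - 1) * k := by
    have : 0 < k := by omega
    have : 0 < k - 1 := by omega
    positivity
  rw [Nat.div_div_eq_div_mul]
  rw [Nat.le_div_iff_mul_le hpos]
  calc C.card * ((k - 1) * k) = C.card * (k * (k - 1)) := by ring
    _ ≤ v - 1 := hkey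
end
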